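/- arXiv:0811.2044 — 3 statements merged into one kernel-verified Lean document; each statement's English description precedes it below -/
import Mathlib

section
/- The function Φ(t) = t / log(e + t) is supermultiplicative: for all s, t ≥ 0, Φ(s·t) ≥ Φ(s)·Φ(t). -/
noncomputable def Phi (t : ℝ) : ℝ := t / Real.log (Real.exp 1 + t)

/-!
Since `Φ s * Φ t = s t / (log (e + s) * log (e + t))`, it suffices to show
`log (e + s t) ≤ log (e + s) * log (e + t)`; say `s ≤ t`. If `s ≤ 1` the left side is at most
`log (e + t)` while `log (e + s) ≥ 1`. If `1 ≤ s`, then `e + s t ≤ s (e + t)`, and AM-GM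
`4 e s ≤ (e + s)²` bounds `log s` by `2 log (e + s) - 1 - log 4`; with `a = log (e + s) ≤ b = log (e + t)`
what remains is `2a + b - 1 - log 4 ≤ a b`, which holds because
`a b - 2a - b + 9/4 = (a - 1)(b - a) + (a - 3/2)² ≥ 0` and `log 4 > 5/4`.
-/

open Real

lemma one_le_log_exp_one_add {x : ℝ} (hx : 0 ≤ x) : 1 ≤ log (exp 1 + x) := by
  simpa using log_le_log (exp_pos 1) (le_add_of_nonneg_right hx)

lemma log_four_add_log_add_log_le {x y : ℝ} (hx : 0 < x) (hy : 0 < y) :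
    log 4 + log x + log y ≤ 2 * log (x + y) := by
  have amgm : 4 * x * y ≤ (x + y) ^ 2 := by nlinarith [sq_nonneg (x - y)]
  have := log_le_log (by positivity) amgm
  rwa [log_mul (by positivity) hy.ne', log_mul (by norm_num) hx.ne', log_pow, Nat.cast_ofNat] at this

lemma five_div_four_lt_log_four : 5 / 4 < log 4 := by
  rw [show (4 : ℝ) = 2 ^ 2 by norm_num, log_pow]
  linarith [log_two_gt_d9]

lemma log_exp_one_add_mul_le_log_add {s t : ℝ} (hs : 1 ≤ s) (ht : 0 ≤ t) :
    log (exp 1 + s * t) ≤ log s + log (exp 1 + t) := by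
  rw [← log_mul (by positivity) (by positivity)]
  exact log_le_log (by positivity) (by nlinarith [exp_pos 1])

lemma log_exp_one_add_mul_le_of_le {s t : ℝ} (hs : 0 ≤ s) (hst : s ≤ t) :
    log (exp 1 + s * t) ≤ log (exp 1 + s) * log (exp 1 + t) := by
  have ht : 0 ≤ t := hs.trans hst
  have ha : 1 ≤ log (exp 1 + s) := one_le_log_exp_one_add hs
  have hb : 1 ≤ log (exp 1 + t) := one_le_log_exp_one_add ht
  rcases le_total s 1 with hs1 | hs1
  · calc log (exp 1 + s * t) ≤ log (exp 1 + t) :=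
          log_le_log (by positivity) (by nlinarith)
      _ ≤ log (exp 1 + s) * log (exp 1 + t) := le_mul_of_one_le_left (by linarith) ha
  · have hab : log (exp 1 + s) ≤ log (exp 1 + t) := log_le_log (by positivity) (by linarith)
    have hlog_s := log_four_add_log_add_log_le (by positivity : 0 < s) (exp_pos 1)
    rw [log_exp, add_comm s] at hlog_s
    linarith [log_exp_one_add_mul_le_log_add hs1 ht, five_div_four_lt_log_four,
      mul_nonneg (sub_nonneg.2 ha) (sub_nonneg.2 hab), sq_nonneg (log (exp 1 + s) - 3 / 2)]

lemma log_exp_one_add_mul_le {s t : ℝ} (hs : 0 ≤ s) (ht : 0 ≤ t) :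
    log (exp 1 + s * t) ≤ log (exp 1 + s) * log (exp 1 + t) := by
  rcases le_total s t with hst | hts
  · exact log_exp_one_add_mul_le_of_le hs hst
  · rw [mul_comm s, mul_comm (log _)]
    exact log_exp_one_add_mul_le_of_le ht hts

theorem phi_supermultiplicative (s t : ℝ) (hs : 0 ≤ s) (ht : 0 ≤ t) :
    Phi s * Phi t ≤ Phi (s * t) := by
  have hlog_pos : 0 < log (exp 1 + s * t) :=
    one_pos.trans_le (one_le_log_exp_one_add (mul_nonneg hs ht))
  rw [Phi, Phi, Phi, div_mul_div_comm]
  exact div_le_div_of_nonneg_left (mul_nonneg hs ht) hlog_pos (log_exp_one_add_mul_le hs ht)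
end

section
/- For all s, t > 0 one has Φ(s·t) ≤ s + e^t − 1, where Φ(t) = t / log(e + t). -/
open Real

lemma Phi_le_self {x : ℝ} (hx : 0 ≤ x) : Phi x ≤ x :=
  div_le_self hx (one_le_log_exp_one_add hx)

lemma Phi_mul_le_left {s t : ℝ} (hs : 0 ≤ s) (hst : 0 ≤ s * t)
    (h : t ≤ log (exp 1 + s * t)) : Phi (s * t) ≤ s := by
  have hL := one_le_log_exp_one_add hst
  rw [Phi, div_le_iff₀ (by linarith)]
  exact mul_le_mul_of_nonneg_left h hs

theorem phi_conjugate_bound (s t : ℝ) (hs : 0 < s) (ht : 0 < t) :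
    Phi (s * t) ≤ s + Real.exp t - 1 := by
  have hst : 0 ≤ s * t := by positivity
  rcases le_or_gt t (log (exp 1 + s * t)) with h | h
  · have := Phi_mul_le_left hs.le hst h
    have := one_le_exp ht.le
    linarith
  · have hexp : exp 1 + s * t < exp t := (log_lt_iff_lt_exp (by positivity)).mp h
    have := Phi_le_self hst
    have := one_le_exp zero_le_one
    linarith
end

section
/- For all s, t, d > 0, Φ(s·t) ≤ log(e + d) · ( s + (1/d)(e^t − 1) ), where Φ(t) = t / log(e + t). -/
/-!
Writing `L x = log (e + x)`, the function `Phi x = x / L x` is supermultiplicative on `[0, ∞)`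
because `L (d * u) ≤ L d * L u`; with `a = L d`, `b = L u` this is the inequality
`e + (e^a - e) (e^b - e) ≤ e^(a b)` for `a, b ≥ 1`, proved by monotonicity in `a`.
Hence `Phi (s t) ≤ Phi (d s t) / Phi d`, and `Phi (d s t) ≤ d s + e^t - 1` by comparing `t`
with `L (d s t)`.
-/

open Real

-- equivalently `b + e^(2-b) ≥ e`, which holds since `e^(2-b) ≥ 3 - b`
lemma exp_sub_exp_one_le_mul_exp_sub_one (b : ℝ) : exp b - exp 1 ≤ b * exp (b - 1) := by
  have hb : exp b = exp (b - 1) * exp 1 := by rw [← exp_add]; ring_nf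
  have h1 : exp 1 = exp (b - 1) * exp (2 - b) := by rw [← exp_add]; ring_nf
  rw [hb, h1]
  nlinarith [exp_pos (b - 1), add_one_le_exp (2 - b), exp_one_lt_d9]

lemma exp_one_add_mul_sub_exp_one_le_exp_mul {a b : ℝ} (ha : 1 ≤ a) (hb : 1 ≤ b) :
    exp 1 + (exp a - exp 1) * (exp b - exp 1) ≤ exp (a * b) := by
  set F : ℝ → ℝ := fun x => exp (x * b) - exp 1 - (exp x - exp 1) * (exp b - exp 1)
  have hF : ∀ x, HasDerivAt F (b * exp (x * b) - exp x * (exp b - exp 1)) x := fun x =>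
    ((((hasDerivAt_id x).mul_const b).exp.sub_const (exp 1)).sub
      ((hasDerivAt_exp x).sub_const (exp 1) |>.mul_const (exp b - exp 1))).congr_deriv
      (by simp only [id]; ring)
  -- `x b ≥ x + b - 1` for `x, b ≥ 1`
  have hF' : ∀ x ∈ interior (Set.Ici 1), 0 ≤ b * exp (x * b) - exp x * (exp b - exp 1) := by
    intro x hx
    rw [interior_Ici, Set.mem_Ioi] at hx
    have hprod : exp (x + b - 1) ≤ exp (x * b) := exp_le_exp.mpr (by nlinarith)
    have hsplit : exp (x + b - 1) = exp x * exp (b - 1) := by rw [← exp_add]; ring_nf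
    nlinarith [exp_pos x, exp_sub_exp_one_le_mul_exp_sub_one b]
  have hmono : MonotoneOn F (Set.Ici 1) :=
    monotoneOn_of_hasDerivWithinAt_nonneg (convex_Ici 1)
      (Continuous.continuousOn (by fun_prop))
      (fun x _ => (hF x).hasDerivWithinAt) hF'
  have hF1a : F 1 ≤ F a := hmono Set.self_mem_Ici (Set.mem_Ici.mpr ha) ha
  have heb : exp 1 ≤ exp b := exp_le_exp.mpr hb
  simp only [F, one_mul, sub_self, zero_mul, sub_zero] at hF1a
  linarith

lemma log_exp_one_add_mul_le_s3 {d u : ℝ} (hd : 0 ≤ d) (hu : 0 ≤ u) :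
    log (exp 1 + d * u) ≤ log (exp 1 + d) * log (exp 1 + u) := by
  have key := exp_one_add_mul_sub_exp_one_le_exp_mul
    (one_le_log_exp_one_add hd) (one_le_log_exp_one_add hu)
  rw [exp_log (by positivity), exp_log (by positivity)] at key
  rw [log_le_iff_le_exp (by positivity)]
  linarith

lemma Phi_pos {x : ℝ} (hx : 0 < x) : 0 < Phi x :=
  div_pos hx (by linarith [one_le_log_exp_one_add hx.le])

lemma Phi_mul_Phi_le {d u : ℝ} (hd : 0 ≤ d) (hu : 0 ≤ u) : Phi d * Phi u ≤ Phi (d * u) := by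
  rw [Phi, Phi, Phi, div_mul_div_comm]
  exact div_le_div_of_nonneg_left (mul_nonneg hd hu)
    (by linarith [one_le_log_exp_one_add (mul_nonneg hd hu)]) (log_exp_one_add_mul_le_s3 hd hu)

lemma Phi_mul_le_add_exp_sub_one {s t : ℝ} (hs : 0 ≤ s) (ht : 0 ≤ t) :
    Phi (s * t) ≤ s + (exp t - 1) := by
  have hst : 0 ≤ s * t := mul_nonneg hs ht
  have hL := one_le_log_exp_one_add hst
  have het : 1 ≤ exp t := one_le_exp ht
  rcases le_or_gt t (log (exp 1 + s * t)) with htL | hLt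
  · have hPhi : Phi (s * t) ≤ s := by
      rw [Phi, div_le_iff₀ (by linarith)]
      exact mul_le_mul_of_nonneg_left htL hs
    linarith
  · have hexp : exp 1 + s * t < exp t := by
      rwa [← exp_lt_exp, exp_log (by positivity)] at hLt
    have hPhi : Phi (s * t) ≤ s * t := div_le_self hst hL
    linarith [add_one_le_exp 1]

theorem phi_weighted_conjugate_bound (s t d : ℝ) (hs : 0 < s) (ht : 0 < t) (hd : 0 < d) :
    Phi (s * t) ≤ Real.log (Real.exp 1 + d) * (s + (1 / d) * (Real.exp t - 1)) := by
  have hPd := Phi_pos hd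
  have hsuper : Phi d * Phi (s * t) ≤ Phi ((d * s) * t) := by
    rw [mul_assoc]; exact Phi_mul_Phi_le hd.le (mul_pos hs ht).le
  have helem := Phi_mul_le_add_exp_sub_one (mul_pos hd hs).le ht.le
  calc Phi (s * t) ≤ (d * s + (exp t - 1)) / Phi d := by
        rw [le_div_iff₀ hPd]; linarith
    _ = log (exp 1 + d) * (s + (1 / d) * (exp t - 1)) := by
        rw [Phi]; field_simp
end
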